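/- arXiv:cs/0610119 — 9 statements merged into one kernel-verified Lean document; each statement's English description precedes it below -/
import Mathlib

section
/- Let P ⊆ ℝ^n be a set, let f_1, …, f_m : P → ℝ, let ε > 0 and T ≥ 1, and let x_1, …, x_T ∈ P and p_1, …, p_T ∈ S_m satisfy: (i) for every t, Σ_{j=1}^m p_t(j) f_j(x_t) > ε; and (ii) for every x ∈ P, Σ_{t=1}^T Σ_j p_t(j) f_j(x_t) ≤ Σ_{t=1}^T Σ_j p_t(j) f_j(x) + εT (the primal online algorithm has regret at most εT). Then the average distribution p̄ = (1/T) Σ_{t=1}^T p_t ∈ S_m satisfies Σ_{j=1}^m p̄_j f_j(x) > 0 for every x ∈ P; in particular, there is no x ∈ P with f_j(x) ≤ 0 for all j ∈ {1,…,m}, i.e., the convex program {f_j(x) ≤ 0 ∀j, x ∈ P} is infeasible. -/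
/-- Correctness of `PrimalGameOpt` (Part 1 of the meta-algorithm theorem):
if at every round the dual distribution `p t` certifies a violation of more than `ε`,
and the primal online algorithm has regret at most `εT`, then the average dual
distribution `p̄ ∈ Sₘ` proves infeasibility: `∑ⱼ p̄ⱼ fⱼ(x) > 0` for every `x ∈ P`,
so there is no `x ∈ P` with `fⱼ(x) ≤ 0` for all `j`. -/
theorem primalGameOpt_correct {n m T : ℕ} (hT : 1 ≤ T)
    (P : Set (Fin n → ℝ)) (f : Fin m → (Fin n → ℝ) → ℝ)
    (ε : ℝ) (hε : 0 < ε)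
    (x : Fin T → Fin n → ℝ) (hx : ∀ t, x t ∈ P)
    (p : Fin T → Fin m → ℝ) (hp : ∀ t, p t ∈ stdSimplex ℝ (Fin m))
    (hviol : ∀ t, ε < ∑ j, p t j * f j (x t))
    (hregret : ∀ y ∈ P,
      ∑ t, ∑ j, p t j * f j (x t) ≤ (∑ t, ∑ j, p t j * f j y) + ε * T) :
    (fun j => (T : ℝ)⁻¹ * ∑ t, p t j) ∈ stdSimplex ℝ (Fin m) ∧
    (∀ y ∈ P, 0 < ∑ j, ((T : ℝ)⁻¹ * ∑ t, p t j) * f j y) ∧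
      ¬ ∃ y ∈ P, ∀ j, f j y ≤ 0 := by
  have hT0 : (0 : ℝ) < (T : ℝ) := by exact_mod_cast hT
  have hmem : (fun j => (T : ℝ)⁻¹ * ∑ t, p t j) ∈ stdSimplex ℝ (Fin m) := by
    constructor
    · intro j
      exact mul_nonneg (inv_nonneg.2 hT0.le)
        (Finset.sum_nonneg fun t _ => (hp t).1 j)
    · rw [← Finset.mul_sum, Finset.sum_comm]
      have : ∀ t ∈ Finset.univ, ∑ j, p t j = 1 := fun t _ => (hp t).2
      rw [Finset.sum_congr rfl this]
      simp [Finset.card_univ]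
      field_simp
  have hpos : ∀ y ∈ P, 0 < ∑ j, ((T : ℝ)⁻¹ * ∑ t, p t j) * f j y := by
    intro y hy
    have h1 : ε * T < ∑ t, ∑ j, p t j * f j (x t) := by
      calc ε * T = ∑ _t : Fin T, ε := by simp [mul_comm]
        _ < _ := Finset.sum_lt_sum_of_nonempty
          (Finset.univ_nonempty_iff.2 ⟨⟨0, hT⟩⟩) (fun t _ => hviol t)
    have h2 := hregret y hy
    have h3 : 0 < ∑ t, ∑ j, p t j * f j y := by linarith
    have h4 : ∑ j, ((T : ℝ)⁻¹ * ∑ t, p t j) * f j y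
        = (T : ℝ)⁻¹ * ∑ t, ∑ j, p t j * f j y := by
      simp only [Finset.mul_sum, Finset.sum_mul, mul_assoc]
      rw [Finset.sum_comm]
    rw [h4]
    positivity
  refine ⟨hmem, hpos, ?_⟩
  rintro ⟨y, hy, hle⟩
  have := hpos y hy
  have : ∑ j, ((T : ℝ)⁻¹ * ∑ t, p t j) * f j y ≤ 0 :=
    Finset.sum_nonpos fun j _ => mul_nonpos_of_nonneg_of_nonpos (hmem.1 j) (hle j)
  linarith [hpos y hy]
end

section
/- Let P ⊆ ℝ^n be a convex set, let f_1, …, f_m : P → ℝ be convex functions, let ε > 0 and T ≥ 1, and let x_1, …, x_T ∈ P and p_1, …, p_T ∈ S_m satisfy: (i) for every t, Σ_{j=1}^m p_t(j) f_j(x_t) ≤ 0; and (ii) for every p ∈ S_m, Σ_{t=1}^T Σ_j p_j f_j(x_t) ≤ Σ_{t=1}^T Σ_j p_t(j) f_j(x_t) + εT (the dual online algorithm, which maximizes, has regret at most εT). Then the average point x̄ = (1/T) Σ_{t=1}^T x_t ∈ P satisfies f_j(x̄) ≤ ε for every j ∈ {1,…,m}, i.e., x̄ is an ε-approximate solution of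 the convex program {f_j(x) ≤ 0 ∀j, x ∈ P}. -/
/-- Correctness of `DualGameOpt` (Part 2 of the meta-algorithm theorem):
if at every round the optimization oracle succeeds, i.e. `∑ⱼ pₜ(j) fⱼ(xₜ) ≤ 0`,
and the dual (maximizing) online algorithm has regret at most `εT`, then the
average point `x̄ = (1/T) ∑ₜ xₜ` lies in `P` and satisfies `fⱼ(x̄) ≤ ε` for all `j`,
i.e. it is an `ε`-approximate solution of the program `{fⱼ(x) ≤ 0 ∀j, x ∈ P}`. -/
theorem dualGameOpt_correct {n m T : ℕ} (hT : 1 ≤ T)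
    (P : Set (Fin n → ℝ)) (hP : Convex ℝ P)
    (f : Fin m → (Fin n → ℝ) → ℝ) (hf : ∀ j, ConvexOn ℝ P (f j))
    (ε : ℝ) (hε : 0 < ε)
    (x : Fin T → Fin n → ℝ) (hx : ∀ t, x t ∈ P)
    (p : Fin T → Fin m → ℝ) (hp : ∀ t, p t ∈ stdSimplex ℝ (Fin m))
    (horacle : ∀ t, ∑ j, p t j * f j (x t) ≤ 0)
    (hregret : ∀ q ∈ stdSimplex ℝ (Fin m),
      ∑ t, ∑ j, q j * f j (x t) ≤ (∑ t, ∑ j, p t j * f j (x t)) + ε * T) :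
    ((T : ℝ)⁻¹ • ∑ t, x t) ∈ P ∧ ∀ j, f j ((T : ℝ)⁻¹ • ∑ t, x t) ≤ ε := by
  have hTpos : (0 : ℝ) < T := by exact_mod_cast hT
  have hw1 : ∑ _t : Fin T, (T : ℝ)⁻¹ = 1 := by
    simp [Finset.sum_const, mul_inv_cancel₀ (ne_of_gt hTpos)]
  have hw0 : ∀ t : Fin T, t ∈ Finset.univ → (0 : ℝ) ≤ (T : ℝ)⁻¹ := fun _ _ =>
    inv_nonneg.2 hTpos.le
  have hsum : ((T : ℝ)⁻¹ • ∑ t, x t) = ∑ t, (T : ℝ)⁻¹ • x t := by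
    rw [Finset.smul_sum]
  have hmem : ((T : ℝ)⁻¹ • ∑ t, x t) ∈ P := by
    rw [hsum]
    exact hP.sum_mem hw0 hw1 fun t _ => hx t
  refine ⟨hmem, fun j => ?_⟩
  -- Jensen
  have hjensen : f j ((T : ℝ)⁻¹ • ∑ t, x t) ≤ ∑ t, (T : ℝ)⁻¹ * f j (x t) := by
    rw [hsum]
    exact (hf j).map_sum_le hw0 hw1 fun t _ => hx t
  -- use q = e_j
  have hq : (fun i => if i = j then (1:ℝ) else 0) ∈ stdSimplex ℝ (Fin m) := by
    constructor
    · intro i; dsimp; split <;> norm_num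
    · simp
  have h1 := hregret _ hq
  simp only [ite_mul, one_mul, zero_mul, Finset.sum_ite_eq', Finset.mem_univ, if_true] at h1
  have h2 : ∑ t, ∑ i, p t i * f i (x t) ≤ 0 :=
    Finset.sum_nonpos fun t _ => horacle t
  have h3 : ∑ t, f j (x t) ≤ ε * T := le_trans h1 (by linarith)
  calc f j ((T : ℝ)⁻¹ • ∑ t, x t) ≤ ∑ t, (T : ℝ)⁻¹ * f j (x t) := hjensen
    _ = (T : ℝ)⁻¹ * ∑ t, f j (x t) := by rw [Finset.mul_sum]
    _ ≤ (T : ℝ)⁻¹ * (ε * T) := by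
        exact mul_le_mul_of_nonneg_left h3 (inv_nonneg.2 hTpos.le)
    _ = ε := by field_simp
end

section
/- Let P ⊆ ℝ^n be a convex set, let f_1, …, f_m : P → ℝ be convex functions, let R_1, R_2 ≥ 0 and T ≥ 1, and let x_1, …, x_T ∈ P, p_1, …, p_T ∈ S_m satisfy the two-sided regret bound: for every x ∈ P and every p ∈ S_m, Σ_{t=1}^T g(x_t, p) − R_1 ≤ Σ_{t=1}^T g(x_t, p_t) ≤ Σ_{t=1}^T g(x, p_t) + R_2, where g(x,p) = Σ_j p_j f_j(x). Set x̄ = (1/T) Σ_t x_t and p̄ = (1/T) Σ_t p_t. Then: (a) if x° ∈ P satisfies g(x°, p) ≤ λ for all p ∈ S_m (for some λ ∈ ℝ), then g(x̄, p) ≤ λ + (R_1 + R_2)/T for all p ∈ S_m; and (b) if p° ∈ S_m satisfies g(x, p°) ≥ λ for all x ∈ P, then g(x, p̄) ≥ λ − (R_1 + R_2)/T for all x ∈ P. -/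
/-- Correctness of `PrimalDualGameOpt` (Part 3 of the meta-algorithm theorem):
under a two-sided regret bound with regrets `R₁, R₂`, with `g(x,p) = ∑ⱼ pⱼ fⱼ(x)`,
(a) if `x° ∈ P` satisfies `g(x°,p) ≤ λ` for all `p ∈ Sₘ`, then the average point
`x̄` satisfies `g(x̄,p) ≤ λ + (R₁+R₂)/T` for all `p ∈ Sₘ`; and
(b) if `p° ∈ Sₘ` satisfies `g(x,p°) ≥ λ` for all `x ∈ P`, then the average
distribution `p̄` satisfies `g(x,p̄) ≥ λ − (R₁+R₂)/T` for all `x ∈ P`. -/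
theorem primalDualGameOpt_correct {n m T : ℕ} (hT : 1 ≤ T)
    (P : Set (Fin n → ℝ)) (hP : Convex ℝ P)
    (f : Fin m → (Fin n → ℝ) → ℝ) (hf : ∀ j, ConvexOn ℝ P (f j))
    (R₁ R₂ : ℝ) (hR₁ : 0 ≤ R₁) (hR₂ : 0 ≤ R₂)
    (x : Fin T → Fin n → ℝ) (hx : ∀ t, x t ∈ P)
    (p : Fin T → Fin m → ℝ) (hp : ∀ t, p t ∈ stdSimplex ℝ (Fin m))
    (hregret : ∀ y ∈ P, ∀ q ∈ stdSimplex ℝ (Fin m),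
      ((∑ t, ∑ j, q j * f j (x t)) - R₁ ≤ ∑ t, ∑ j, p t j * f j (x t)) ∧
      (∑ t, ∑ j, p t j * f j (x t) ≤ (∑ t, ∑ j, p t j * f j y) + R₂)) :
    (∀ (lam : ℝ) (x0 : Fin n → ℝ), x0 ∈ P →
        (∀ q ∈ stdSimplex ℝ (Fin m), ∑ j, q j * f j x0 ≤ lam) →
        ∀ q ∈ stdSimplex ℝ (Fin m),
          ∑ j, q j * f j ((T : ℝ)⁻¹ • ∑ t, x t) ≤ lam + (R₁ + R₂) / T) ∧
    (∀ (lam : ℝ) (p0 : Fin m → ℝ), p0 ∈ stdSimplex ℝ (Fin m) →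
        (∀ y ∈ P, lam ≤ ∑ j, p0 j * f j y) →
        ∀ y ∈ P, lam - (R₁ + R₂) / T ≤ ∑ j, ((T : ℝ)⁻¹ * ∑ t, p t j) * f j y) := by
  have hTpos : (0:ℝ) < T := by exact_mod_cast hT
  -- Jensen per coordinate
  have hwsum : ∑ _t : Fin T, (T:ℝ)⁻¹ = 1 := by
    simp [Finset.sum_const, Finset.card_univ]
    field_simp
  have hjensen : ∀ j, f j ((T : ℝ)⁻¹ • ∑ t, x t) ≤ (T:ℝ)⁻¹ * ∑ t, f j (x t) := by
    intro j
    have h1 : (T : ℝ)⁻¹ • ∑ t, x t = ∑ t, (T:ℝ)⁻¹ • x t := by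
      rw [Finset.smul_sum]
    rw [h1]
    have := (hf j).map_sum_le (t := Finset.univ) (w := fun _ => (T:ℝ)⁻¹)
      (p := x) (fun i _ => by positivity) hwsum (fun i _ => hx i)
    calc f j (∑ t, (T:ℝ)⁻¹ • x t) ≤ ∑ t, (T:ℝ)⁻¹ * f j (x t) := this
      _ = (T:ℝ)⁻¹ * ∑ t, f j (x t) := (Finset.mul_sum _ _ _).symm
  constructor
  · intro lam x0 hx0 hlam q hq
    obtain ⟨h1, h2⟩ := hregret x0 hx0 q hq
    have h3 : ∑ t, ∑ j, p t j * f j x0 ≤ T * lam := by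
      calc ∑ t, ∑ j, p t j * f j x0 ≤ ∑ _t : Fin T, lam :=
            Finset.sum_le_sum fun t _ => hlam (p t) (hp t)
        _ = T * lam := by simp [Finset.sum_const, Finset.card_univ, mul_comm]
    have key : ∑ t, ∑ j, q j * f j (x t) ≤ T * lam + R₁ + R₂ := by linarith
    have hswap : (T:ℝ)⁻¹ * ∑ t, ∑ j, q j * f j (x t)
        = ∑ j, q j * ((T:ℝ)⁻¹ * ∑ t, f j (x t)) := by
      simp only [Finset.mul_sum]
      rw [Finset.sum_comm]
      exact Finset.sum_congr rfl fun j _ => Finset.sum_congr rfl fun t _ => by ring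
    have step : ∑ j, q j * f j ((T : ℝ)⁻¹ • ∑ t, x t)
        ≤ (T:ℝ)⁻¹ * ∑ t, ∑ j, q j * f j (x t) := by
      rw [hswap]
      exact Finset.sum_le_sum fun j _ =>
        mul_le_mul_of_nonneg_left (hjensen j) (hq.1 j)
    calc ∑ j, q j * f j ((T : ℝ)⁻¹ • ∑ t, x t)
        ≤ (T:ℝ)⁻¹ * ∑ t, ∑ j, q j * f j (x t) := step
      _ ≤ (T:ℝ)⁻¹ * (T * lam + R₁ + R₂) :=
          mul_le_mul_of_nonneg_left key (by positivity)
      _ = lam + (R₁ + R₂) / T := by field_simp; ring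
  · intro lam p0 hp0 hlam y hy
    obtain ⟨h1, h2⟩ := hregret y hy p0 hp0
    have h3 : (T:ℝ) * lam ≤ ∑ t, ∑ j, p0 j * f j (x t) := by
      calc (T:ℝ) * lam = ∑ _t : Fin T, lam := by
            simp [Finset.sum_const, Finset.card_univ, mul_comm]
        _ ≤ ∑ t, ∑ j, p0 j * f j (x t) :=
            Finset.sum_le_sum fun t _ => hlam (x t) (hx t)
    have key : (T:ℝ) * lam - R₁ - R₂ ≤ ∑ t, ∑ j, p t j * f j y := by linarith
    have heq : ∑ j, ((T : ℝ)⁻¹ * ∑ t, p t j) * f j y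
        = (T:ℝ)⁻¹ * ∑ t, ∑ j, p t j * f j y := by
      simp only [Finset.mul_sum, Finset.sum_mul]
      rw [Finset.sum_comm]
      exact Finset.sum_congr rfl fun t _ => Finset.sum_congr rfl fun j _ => by ring
    rw [heq]
    have := mul_le_mul_of_nonneg_left key (le_of_lt (inv_pos.mpr hTpos))
    calc lam - (R₁ + R₂) / T = (T:ℝ)⁻¹ * ((T:ℝ) * lam - R₁ - R₂) := by
          field_simp; ring
      _ ≤ (T:ℝ)⁻¹ * ∑ t, ∑ j, p t j * f j y := this
end

section
/- Let ω > 0, ε ≥ 0, and ρ ∈ [−ω, ω]. If a real number v satisfies |v| ≤ ω and log(e + v/ω) ≥ log(e + ρ/ω) − ε, then v ≥ ρ(1 − ε) − eωε; in particular v ≥ ρ(1 − ε) − 3ωε. Consequently, if x ∈ P satisfies log(e + f_j(x)/ω) ≥ log(e + ρ/ω) − ε for all j ∈ [m] (where |f_j| ≤ ω on P and ρ = max_{x∈P} min_j f_j(x)), then f_j(x) ≥ ρ(1−ε) − 3ωε for all j, i.e., an ε-approximate solution of the log-transformed program is a 3ωε-approximate solution of the original program. -/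
lemma log_transfer_key (ω ε ρ : ℝ) (hω : 0 < ω) (hε : 0 ≤ ε) (hρ : |ρ| ≤ ω)
    (v : ℝ) (hv : |v| ≤ ω)
    (h : Real.log (Real.exp 1 + ρ / ω) - ε ≤ Real.log (Real.exp 1 + v / ω)) :
    ρ * (1 - ε) - Real.exp 1 * ω * ε ≤ v := by
  have he1 : (1:ℝ) < Real.exp 1 := by
    have := Real.exp_one_gt_d9; linarith
  have hρω : -1 ≤ ρ / ω := by
    rw [le_div_iff₀ hω]; have := abs_le.mp hρ; linarith [this.1]
  have hvω : -1 ≤ v / ω := by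
    rw [le_div_iff₀ hω]; have := abs_le.mp hv; linarith [this.1]
  have ha : 0 < Real.exp 1 + ρ / ω := by linarith
  have hb : 0 < Real.exp 1 + v / ω := by linarith
  have h1 : (Real.exp 1 + ρ / ω) * Real.exp (-ε) ≤ Real.exp 1 + v / ω := by
    have h2 := Real.exp_le_exp.mpr h
    rw [Real.exp_sub, Real.exp_log ha, Real.exp_log hb, div_le_iff₀ (Real.exp_pos ε)] at h2
    calc (Real.exp 1 + ρ / ω) * Real.exp (-ε)
        = (Real.exp 1 + ρ / ω) / Real.exp ε := by
          rw [Real.exp_neg]; ring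
      _ ≤ Real.exp 1 + v / ω := by
          rw [div_le_iff₀ (Real.exp_pos ε)]; exact h2
  have h3 : 1 - ε ≤ Real.exp (-ε) := by
    have := Real.add_one_le_exp (-ε); linarith
  have h4 : (Real.exp 1 + ρ / ω) * (1 - ε) ≤ Real.exp 1 + v / ω := by
    nlinarith
  have h5 : (Real.exp 1 + ρ / ω) * (1 - ε) * ω ≤ (Real.exp 1 + v / ω) * ω := by
    exact mul_le_mul_of_nonneg_right h4 hω.le
  have hρ' : ρ / ω * ω = ρ := div_mul_cancel₀ ρ hω.ne'
  have hv' : v / ω * ω = v := div_mul_cancel₀ v hω.ne'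
  nlinarith [h5]

/-- Claim 2 (approximation transfer): if `|v| ≤ ω` and
`log(e + v/ω) ≥ log(e + ρ/ω) − ε`, then `v ≥ ρ(1−ε) − eωε ≥ ρ(1−ε) − 3ωε`.
Consequently an `ε`-approximate solution of the log-transformed program is a
`3ωε`-approximate solution of the original program. -/
theorem log_transfer_approx {n m : ℕ}
    (P : Set (Fin n → ℝ)) (f : Fin m → (Fin n → ℝ) → ℝ)
    (ω ε ρ : ℝ) (hω : 0 < ω) (hε : 0 ≤ ε)
    (hρ : |ρ| ≤ ω) (hfb : ∀ j, ∀ x ∈ P, |f j x| ≤ ω) :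
    (∀ v : ℝ, |v| ≤ ω →
      Real.log (Real.exp 1 + ρ / ω) - ε ≤ Real.log (Real.exp 1 + v / ω) →
      ρ * (1 - ε) - Real.exp 1 * ω * ε ≤ v ∧ ρ * (1 - ε) - 3 * ω * ε ≤ v) ∧
    (∀ x ∈ P,
      (∀ j, Real.log (Real.exp 1 + ρ / ω) - ε ≤ Real.log (Real.exp 1 + f j x / ω)) →
      ∀ j, ρ * (1 - ε) - 3 * ω * ε ≤ f j x) := by
  have he3 : Real.exp 1 ≤ 3 := by
    have := Real.exp_one_lt_d9; linarith
  have key : ∀ v : ℝ, |v| ≤ ω →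
      Real.log (Real.exp 1 + ρ / ω) - ε ≤ Real.log (Real.exp 1 + v / ω) →
      ρ * (1 - ε) - Real.exp 1 * ω * ε ≤ v ∧ ρ * (1 - ε) - 3 * ω * ε ≤ v := by
    intro v hv h
    have h1 := log_transfer_key ω ε ρ hω hε hρ v hv h
    refine ⟨h1, ?_⟩
    nlinarith [mul_nonneg (mul_nonneg (sub_nonneg.mpr he3) hω.le) hε]
  exact ⟨key, fun x hx hlog j => (key (f j x) (hfb j x hx) (hlog j)).2⟩
end

section
/- Let n ≥ 1, G > 0, and 0 < η ≤ 1/2. Let v_1, …, v_T ∈ ℝ^n with ‖v_t‖_∞ ≤ G for all t. Define weights by w^1_i = 1 and w^{t+1}_i = w^t_i · (1 − η v_t(i)/G) for all i ∈ [n], and set x_t = w^t / Σ_{i=1}^n w^t_i ∈ S_n. Then for every x* ∈ S_n: Σ_{t=1}^T ⟨x_t, v_t⟩ ≤ Σ_{t=1}^T ⟨x*, v_t⟩ + η Σ_{t=1}^T ⟨x*, |v_t|⟩ + (G log n)/η, where |v_t| denotes the vector whose i-th coordinate is |v_t(i)|. -/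
open Real Finset

/-! With normalised losses `ℓₜ = η vₜ / G`, which satisfy `|ℓₜ(i)| ≤ 1/2`, the potential
`Φₜ = ∑ᵢ wᵗᵢ` obeys `Φₜ₊₁ = Φₜ (1 - ⟨xₜ, ℓₜ⟩)`, so `log (1 - a) ≤ -a` gives
`log Φ_T ≤ log n - ∑ₜ ⟨xₜ, ℓₜ⟩`. Conversely `log Φ_T ≥ ∑ᵢ x*ᵢ log w^Tᵢ`, and
`log (1 - z) ≥ -z - z²` for `|z| ≤ 1/2` bounds each `log w^Tᵢ = ∑ₜ log (1 - ℓₜ(i))` from below.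
Comparing the two bounds and multiplying by `G / η` leaves a quadratic term
`(η / G) ∑ₜ ⟨x*, vₜ²⟩`, which `vₜ(i)² ≤ G |vₜ(i)|` bounds by `η ∑ₜ ⟨x*, |vₜ|⟩`. -/

-- Equivalent to `1 ≤ (1 - z) exp (z + z²)`; for `z ≥ 0` use `exp u ≥ 1 + u + u² / 2`.
theorem neg_sub_sq_le_log_one_sub {z : ℝ} (hz : |z| ≤ 1 / 2) : -z - z ^ 2 ≤ log (1 - z) := by
  obtain ⟨hz₁, hz₂⟩ := abs_le.mp hz
  rw [le_log_iff_exp_le (by linarith), ← neg_add', exp_neg, inv_le_iff_one_le_mul₀ (exp_pos _)]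
  rcases le_total z 0 with hz₀ | hz₀
  · nlinarith [add_one_le_exp (z + z ^ 2)]
  · nlinarith [quadratic_le_exp_of_nonneg (by positivity : 0 ≤ z + z ^ 2)]

section

variable {ι : Type*} [Fintype ι]

theorem sum_mul_log_le_log_sum {p W : ι → ℝ} (hp : p ∈ stdSimplex ℝ ι) (hW : ∀ i, 0 < W i) :
    ∑ i, p i * log (W i) ≤ log (∑ i, W i) :=
  calc ∑ i, p i * log (W i) ≤ ∑ i, p i * log (∑ k, W k) := by
        gcongr with i
        · exact hp.1 i
        · exact hW i
        · exact single_le_sum (fun k _ => (hW k).le) (mem_univ i)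
    _ = log (∑ k, W k) := by rw [← sum_mul, hp.2, one_mul]

theorem log_sum_mul_one_sub_le [Nonempty ι] {W ℓ : ι → ℝ} (hW : ∀ i, 0 < W i)
    (hℓ : ∀ i, ℓ i < 1) :
    log (∑ i, W i * (1 - ℓ i)) ≤ log (∑ i, W i) - ∑ i, W i / (∑ k, W k) * ℓ i := by
  have hS : 0 < ∑ i, W i := sum_pos (fun i _ => hW i) univ_nonempty
  have hS' : 0 < ∑ i, W i * (1 - ℓ i) :=
    sum_pos (fun i _ => mul_pos (hW i) (sub_pos.mpr (hℓ i))) univ_nonempty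
  have hratio : (∑ i, W i * (1 - ℓ i)) / ∑ i, W i - 1 = -∑ i, W i / (∑ k, W k) * ℓ i := by
    simp only [mul_one_sub, sum_sub_distrib, div_mul_eq_mul_div, ← sum_div]
    field_simp
    ring
  have := log_le_sub_one_of_pos (div_pos hS' hS)
  rw [log_div hS'.ne' hS.ne', hratio] at this
  linarith

end

namespace MultiplicativeWeights

variable {ι : Type*} {T : ℕ} {ℓ w x : ℕ → ι → ℝ}

theorem weight_eq_prod (hw0 : ∀ i, w 0 i = 1)
    (hw : ∀ t < T, ∀ i, w (t + 1) i = w t i * (1 - ℓ t i)) :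
    ∀ t ≤ T, ∀ i, w t i = ∏ s ∈ range t, (1 - ℓ s i) := by
  intro t ht i
  induction t with
  | zero => simp [hw0]
  | succ t ih => rw [hw t ht i, ih (by omega), prod_range_succ]

theorem weight_pos (hℓ : ∀ t < T, ∀ i, ℓ t i < 1) (hw0 : ∀ i, w 0 i = 1)
    (hw : ∀ t < T, ∀ i, w (t + 1) i = w t i * (1 - ℓ t i)) :
    ∀ t ≤ T, ∀ i, 0 < w t i := by
  intro t ht i
  rw [weight_eq_prod hw0 hw t ht i]
  exact prod_pos fun s hs => sub_pos.mpr (hℓ s (by rw [mem_range] at hs; omega) i)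

theorem sum_neg_sub_sq_le_log_weight (hℓ : ∀ t < T, ∀ i, |ℓ t i| ≤ 1 / 2)
    (hw0 : ∀ i, w 0 i = 1) (hw : ∀ t < T, ∀ i, w (t + 1) i = w t i * (1 - ℓ t i)) (i : ι) :
    ∑ t ∈ range T, (-ℓ t i - ℓ t i ^ 2) ≤ log (w T i) := by
  have hℓT : ∀ t ∈ range T, |ℓ t i| ≤ 1 / 2 := fun t ht => hℓ t (mem_range.mp ht) i
  rw [weight_eq_prod hw0 hw T le_rfl i,
    log_prod fun t ht => by linarith [(abs_le.mp (hℓT t ht)).2]]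
  exact sum_le_sum fun t ht => neg_sub_sq_le_log_one_sub (hℓT t ht)

variable [Fintype ι]

theorem log_sum_weight_le [Nonempty ι] (hℓ : ∀ t < T, ∀ i, ℓ t i < 1)
    (hw0 : ∀ i, w 0 i = 1) (hw : ∀ t < T, ∀ i, w (t + 1) i = w t i * (1 - ℓ t i))
    (hx : ∀ t i, x t i = w t i / ∑ k, w t k) :
    ∀ t ≤ T, log (∑ i, w t i) ≤ log (Fintype.card ι) - ∑ s ∈ range t, ∑ i, x s i * ℓ s i := by
  intro t ht
  induction t with
  | zero => simp [hw0]
  | succ t ih =>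
    have hstep := log_sum_mul_one_sub_le (weight_pos hℓ hw0 hw t (by omega)) (hℓ t ht)
    simp only [← hx] at hstep
    rw [sum_congr rfl fun i _ => hw t ht i, sum_range_succ]
    linarith [ih (by omega)]

theorem sum_expected_loss_le (hℓ : ∀ t < T, ∀ i, |ℓ t i| ≤ 1 / 2)
    (hw0 : ∀ i, w 0 i = 1) (hw : ∀ t < T, ∀ i, w (t + 1) i = w t i * (1 - ℓ t i))
    (hx : ∀ t i, x t i = w t i / ∑ k, w t k) {p : ι → ℝ} (hp : p ∈ stdSimplex ℝ ι) :
    ∑ t ∈ range T, ∑ i, x t i * ℓ t i ≤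
      ∑ t ∈ range T, ∑ i, p i * ℓ t i + ∑ t ∈ range T, ∑ i, p i * ℓ t i ^ 2 +
        log (Fintype.card ι) := by
  obtain ⟨i₀, -⟩ := nonempty_of_sum_ne_zero (hp.2.symm ▸ one_ne_zero : ∑ i, p i ≠ 0)
  have : Nonempty ι := ⟨i₀⟩
  have hℓ₁ : ∀ t < T, ∀ i, ℓ t i < 1 := fun t ht i => by linarith [(abs_le.mp (hℓ t ht i)).2]
  have hlower : ∑ t ∈ range T, ∑ i, p i * (-ℓ t i - ℓ t i ^ 2) ≤ ∑ i, p i * log (w T i) := by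
    rw [sum_comm]
    exact sum_le_sum fun i _ => by
      rw [← mul_sum]
      exact mul_le_mul_of_nonneg_left (sum_neg_sub_sq_le_log_weight hℓ hw0 hw i) (hp.1 i)
  have hmid := sum_mul_log_le_log_sum hp (weight_pos hℓ₁ hw0 hw T le_rfl)
  have hupper := log_sum_weight_le hℓ₁ hw0 hw hx T le_rfl
  simp only [mul_sub, mul_neg, sum_sub_distrib, sum_neg_distrib] at hlower
  linarith

theorem sum_expected_loss_le_of_learningRate {ε : ℝ} (hε : 0 < ε) {m : ℕ → ι → ℝ}
    (hm : ∀ t < T, ∀ i, ε * |m t i| ≤ 1 / 2) (hw0 : ∀ i, w 0 i = 1)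
    (hw : ∀ t < T, ∀ i, w (t + 1) i = w t i * (1 - ε * m t i))
    (hx : ∀ t i, x t i = w t i / ∑ k, w t k) {p : ι → ℝ} (hp : p ∈ stdSimplex ℝ ι) :
    ∑ t ∈ range T, ∑ i, x t i * m t i ≤
      ∑ t ∈ range T, ∑ i, p i * m t i + ε * ∑ t ∈ range T, ∑ i, p i * m t i ^ 2 +
        log (Fintype.card ι) / ε := by
  have hℓ : ∀ t < T, ∀ i, |ε * m t i| ≤ 1 / 2 := fun t ht i => by
    rw [abs_mul, abs_of_pos hε]
    exact hm t ht i
  have key := sum_expected_loss_le hℓ hw0 hw hx hp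
  simp only [mul_pow, sq ε, mul_assoc, mul_left_comm _ ε, ← mul_sum] at key
  rw [← sub_le_iff_le_add', le_div_iff₀ hε]
  linarith

end MultiplicativeWeights

theorem multiplicativeWeights_core_general {n : ℕ} (T : ℕ)
    (G η : ℝ) (hG : 0 < G) (hη₀ : 0 < η) (hη : η ≤ 1 / 2)
    (v : ℕ → Fin n → ℝ) (hv : ∀ t, t < T → ∀ i, |v t i| ≤ G)
    (w : ℕ → Fin n → ℝ) (hw0 : ∀ i, w 0 i = 1)
    (hw : ∀ t, t < T → ∀ i, w (t + 1) i = w t i * (1 - η * v t i / G))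
    (x : ℕ → Fin n → ℝ) (hx : ∀ t i, x t i = w t i / ∑ k, w t k) :
    ∀ xstar ∈ stdSimplex ℝ (Fin n),
      ∑ t ∈ Finset.range T, ∑ i, x t i * v t i ≤
        (∑ t ∈ Finset.range T, ∑ i, xstar i * v t i) +
          η * ∑ t ∈ Finset.range T, ∑ i, xstar i * |v t i| +
          G * Real.log n / η := by
  intro xstar hxstar
  have hc : 0 < η / G := div_pos hη₀ hG
  have hsq : ∑ t ∈ range T, ∑ i, xstar i * v t i ^ 2 ≤
      G * ∑ t ∈ range T, ∑ i, xstar i * |v t i| := by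
    simp only [mul_sum, mul_left_comm G]
    gcongr with t ht i
    · exact hxstar.1 i
    · rw [← sq_abs, sq]
      exact mul_le_mul_of_nonneg_right (hv t (mem_range.mp ht) i) (abs_nonneg _)
  have key := MultiplicativeWeights.sum_expected_loss_le_of_learningRate (m := v) hc
    (fun t ht i => by
      rw [div_mul_eq_mul_div, div_le_iff₀ hG]
      nlinarith [hv t ht i, abs_nonneg (v t i)])
    hw0 (fun t ht i => by rw [hw t ht i, mul_div_right_comm]) hx hxstar
  rw [Fintype.card_fin] at key
  calc _ ≤ _ := key
    _ ≤ ∑ t ∈ range T, ∑ i, xstar i * v t i +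
          η / G * (G * ∑ t ∈ range T, ∑ i, xstar i * |v t i|) + log n / (η / G) := by gcongr
    _ = _ := by field_simp

/-- Core inequality of the Multiplicative Weights analysis: with weights
`w⁰ᵢ = 1`, `wᵗ⁺¹ᵢ = wᵗᵢ (1 − η vₜ(i)/G)` and plays `xₜ = wᵗ / ∑ᵢ wᵗᵢ`, for every
`x* ∈ Sₙ`,
`∑ₜ ⟨xₜ, vₜ⟩ ≤ ∑ₜ ⟨x*, vₜ⟩ + η ∑ₜ ⟨x*, |vₜ|⟩ + (G log n)/η`. -/
theorem multiplicativeWeights_core {n : ℕ} (hn : 1 ≤ n) (T : ℕ)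
    (G η : ℝ) (hG : 0 < G) (hη₀ : 0 < η) (hη : η ≤ 1 / 2)
    (v : ℕ → Fin n → ℝ) (hv : ∀ t, t < T → ∀ i, |v t i| ≤ G)
    (w : ℕ → Fin n → ℝ) (hw0 : ∀ i, w 0 i = 1)
    (hw : ∀ t, t < T → ∀ i, w (t + 1) i = w t i * (1 - η * v t i / G))
    (x : ℕ → Fin n → ℝ) (hx : ∀ t i, x t i = w t i / ∑ k, w t k) :
    ∀ xstar ∈ stdSimplex ℝ (Fin n),
      ∑ t ∈ Finset.range T, ∑ i, x t i * v t i ≤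
        (∑ t ∈ Finset.range T, ∑ i, xstar i * v t i) +
          η * ∑ t ∈ Finset.range T, ∑ i, xstar i * |v t i| +
          G * Real.log n / η :=
  multiplicativeWeights_core_general T G η hG hη₀ hη v hv w hw0 hw x hx
end

section
/- Let n ≥ 2, G > 0, T ≥ 1, and suppose η = √(log n / T) satisfies η ≤ 1/2 (e.g., T ≥ 4 log n). Let f_1, …, f_T : ℝ^n → ℝ be convex differentiable functions with ‖∇f_t(x)‖_∞ ≤ G for all x ∈ S_n and all t. Define the Multiplicative Weights iterates: w^1_i = 1, x_t = w^t / Σ_i w^t_i, and w^{t+1}_i = w^t_i · (1 − η ∇f_t(x_t)(i)/G). Then the regret satisfies Σ_{t=1}^T f_t(x_t) − min_{x ∈ S_n} Σ_{t=1}^T f_t(x) ≤ ηTG + (G log n)/η = 2G √(T log n). -/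
/-! With the rescaled losses `ℓₜ = ∇fₜ(xₜ) / G ∈ [-1, 1]ⁿ`, the total weight `Φₜ = ∑ᵢ wₜᵢ`
satisfies `Φₜ₊₁ = Φₜ (1 - η⟨xₜ, ℓₜ⟩) ≤ Φₜ exp (-η⟨xₜ, ℓₜ⟩)`, while a single weight satisfies
`w_Tᵢ ≥ exp (-η ∑ₜ ℓₜᵢ - η² T)` because `1 - u ≥ exp (-u - u²)` for `|u| ≤ 1/2`.
Comparing `w_Tᵢ ≤ Φ_T ≤ n exp (-η ∑ₜ ⟨xₜ, ℓₜ⟩)` bounds the regret against each coordinate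
vertex by `log n / η + η T`, hence against every point of the simplex by averaging.
Convexity reduces the regret of the `fₜ` to this linear one:
`fₜ(xₜ) - fₜ(x*) ≤ ⟨∇fₜ(xₜ), xₜ - x*⟩`. -/

open Finset Real

theorem ConvexOn.add_fderiv_le {E : Type*} [NormedAddCommGroup E] [NormedSpace ℝ E]
    {s : Set E} {f : E → ℝ} {f' : E →L[ℝ] ℝ} {x y : E} (hf : ConvexOn ℝ s f)
    (hx : x ∈ s) (hy : y ∈ s) (hfx : HasFDerivAt f f' x) :
    f x + f' (y - x) ≤ f y := by
  have hline : ConvexOn ℝ (Set.Icc 0 1) (f ∘ AffineMap.lineMap (k := ℝ) x y) :=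
    (hf.comp_affineMap (AffineMap.lineMap x y)).subset
      (fun t ht => hf.1.lineMap_mem hx hy ht) (convex_Icc 0 1)
  have hderiv : HasDerivAt (f ∘ AffineMap.lineMap (k := ℝ) x y) (f' (y - x)) 0 := by
    rw [← AffineMap.lineMap_apply_zero x y (k := ℝ)] at hfx
    exact hfx.comp_hasDerivAt 0 AffineMap.hasDerivAt_lineMap
  have := hline.le_slope_of_hasDerivAt (by simp) (by simp) one_pos hderiv
  simp only [slope_def_field, Function.comp_apply, AffineMap.lineMap_apply_zero,
    AffineMap.lineMap_apply_one, sub_zero, div_one] at this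
  linarith

theorem ConvexOn.sub_le_sum_sub_mul_gradient {ι : Type*} [Fintype ι]
    {s : Set (EuclideanSpace ℝ ι)} {f : EuclideanSpace ℝ ι → ℝ} {g x y : EuclideanSpace ℝ ι}
    (hf : ConvexOn ℝ s f) (hx : x ∈ s) (hy : y ∈ s) (hfx : HasGradientAt f g x) :
    f x - f y ≤ ∑ i, (x i - y i) * g i := by
  have key := hf.add_fderiv_le hx hy hfx.hasFDerivAt
  have hinner : InnerProductSpace.toDual ℝ _ g (y - x) = -∑ i, (x i - y i) * g i := by
    rw [InnerProductSpace.toDual_apply_apply, PiLp.inner_apply, ← sum_neg_distrib]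
    refine sum_congr rfl fun i _ => ?_
    simp only [PiLp.sub_apply, RCLike.inner_apply, conj_trivial]
    ring
  linarith

theorem exp_neg_sub_sq_le_one_sub {u : ℝ} (hu : |u| ≤ 1 / 2) : exp (-u - u ^ 2) ≤ 1 - u := by
  obtain ⟨hlo, hhi⟩ := abs_le.mp hu
  have key : 1 ≤ (1 - u) * exp (u + u ^ 2) := by
    rcases le_total u 0 with hneg | hpos
    · calc 1 ≤ (1 - u) * (u + u ^ 2 + 1) := by nlinarith
        _ ≤ _ := by gcongr; linarith; exact add_one_le_exp _
    · calc 1 ≤ (1 - u) * (1 + (u + u ^ 2) + (u + u ^ 2) ^ 2 / 2) := by nlinarith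
        _ ≤ _ := by gcongr; linarith; exact quadratic_le_exp_of_nonneg (by positivity)
  rw [show -u - u ^ 2 = -(u + u ^ 2) by ring, exp_neg, inv_le_iff_one_le_mul₀ (exp_pos _)]
  linarith

theorem sqrt_div_mul_add_div_sqrt_div {a b : ℝ} (ha : 0 ≤ a) (hb : 0 ≤ b) :
    √(a / b) * b + a / √(a / b) = 2 * √(b * a) := by
  rw [sqrt_div' _ hb, sqrt_mul hb]
  rcases hb.eq_or_lt with rfl | hb
  · simp
  rcases ha.eq_or_lt with rfl | ha
  · simp
  have : 0 < √a := sqrt_pos.2 ha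
  have : 0 < √b := sqrt_pos.2 hb
  field_simp
  rw [sq_sqrt ha.le, sq_sqrt hb.le]; ring

structure IsMultiplicativeWeightsRun {ι : Type*} [Fintype ι] (η : ℝ) (T : ℕ)
    (ℓ w p : ℕ → ι → ℝ) : Prop where
  weight_zero : ∀ i, w 0 i = 1
  weight_succ : ∀ t < T, ∀ i, w (t + 1) i = w t i * (1 - η * ℓ t i)
  dist_eq : ∀ t i, p t i = w t i / ∑ k, w t k
  -- the loss of round `t` may depend on the point `p t` played in that round
  abs_loss_le_one : ∀ t < T, p t ∈ stdSimplex ℝ ι → ∀ i, |ℓ t i| ≤ 1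

namespace IsMultiplicativeWeightsRun

variable {ι : Type*} [Fintype ι] {η : ℝ} {T : ℕ} {ℓ w p : ℕ → ι → ℝ}

theorem sum_weight_succ (h : IsMultiplicativeWeightsRun η T ℓ w p) {t : ℕ} (ht : t < T)
    (hsum : ∑ k, w t k ≠ 0) :
    ∑ i, w (t + 1) i = (∑ i, w t i) * (1 - η * ∑ i, p t i * ℓ t i) := by
  simp only [h.weight_succ t ht, h.dist_eq, mul_sub, mul_one, sum_sub_distrib, mul_sum]
  congr 1
  refine sum_congr rfl fun i _ => ?_
  field_simp

variable [Nonempty ι]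

theorem dist_mem_stdSimplex (h : IsMultiplicativeWeightsRun η T ℓ w p) {t : ℕ}
    (hw : ∀ i, 0 < w t i) : p t ∈ stdSimplex ℝ ι := by
  have hsum : 0 < ∑ k, w t k := sum_pos (fun k _ => hw k) univ_nonempty
  refine ⟨fun i => ?_, ?_⟩
  · rw [h.dist_eq]; exact div_nonneg (hw i).le hsum.le
  · simp only [h.dist_eq, ← sum_div, div_self hsum.ne']

theorem abs_mul_loss_le_half (h : IsMultiplicativeWeightsRun η T ℓ w p) (hη : 0 ≤ η)
    (hη2 : η ≤ 1 / 2) {t : ℕ} (ht : t < T) (hw : ∀ i, 0 < w t i) (i : ι) : |η * ℓ t i| ≤ 1 / 2 := by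
  rw [abs_mul, abs_of_nonneg hη]
  nlinarith [h.abs_loss_le_one t ht (h.dist_mem_stdSimplex hw) i, abs_nonneg (ℓ t i)]

theorem weight_pos (h : IsMultiplicativeWeightsRun η T ℓ w p) (hη : 0 ≤ η) (hη2 : η ≤ 1 / 2) :
    ∀ t ≤ T, ∀ i, 0 < w t i
  | 0, _, i => by simp [h.weight_zero]
  | t + 1, ht, i => by
    have hw := h.weight_pos hη hη2 t (by omega)
    have := abs_le.mp (h.abs_mul_loss_le_half hη hη2 (by omega) hw i)
    rw [h.weight_succ t (by omega)]
    exact mul_pos (hw i) (by linarith)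

theorem sum_weight_le (h : IsMultiplicativeWeightsRun η T ℓ w p) (hη : 0 ≤ η) (hη2 : η ≤ 1 / 2) :
    ∀ t ≤ T, ∑ i, w t i ≤ Fintype.card ι * exp (-η * ∑ s ∈ range t, ∑ i, p s i * ℓ s i)
  | 0, _ => by simp [h.weight_zero]
  | t + 1, ht => by
    have hw := h.weight_pos hη hη2 t (by omega)
    have hsum : 0 < ∑ k, w t k := sum_pos (fun k _ => hw k) univ_nonempty
    calc ∑ i, w (t + 1) i = (∑ i, w t i) * (1 - η * ∑ i, p t i * ℓ t i) :=
          h.sum_weight_succ (by omega) hsum.ne'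
      _ ≤ (∑ i, w t i) * exp (-η * ∑ i, p t i * ℓ t i) := by
          gcongr; linarith [add_one_le_exp (-η * ∑ i, p t i * ℓ t i)]
      _ ≤ (Fintype.card ι * exp (-η * ∑ s ∈ range t, ∑ i, p s i * ℓ s i)) *
            exp (-η * ∑ i, p t i * ℓ t i) := by
          gcongr; exact h.sum_weight_le hη hη2 t (by omega)
      _ = _ := by rw [sum_range_succ, mul_add, exp_add, mul_assoc]

theorem exp_le_weight (h : IsMultiplicativeWeightsRun η T ℓ w p) (hη : 0 ≤ η) (hη2 : η ≤ 1 / 2)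
    (i : ι) : ∀ t ≤ T, exp (-η * ∑ s ∈ range t, ℓ s i - η ^ 2 * t) ≤ w t i
  | 0, _ => by simp [h.weight_zero]
  | t + 1, ht => by
    have hw := h.weight_pos hη hη2 t (by omega)
    have hstep := h.abs_mul_loss_le_half hη hη2 (by omega) hw i
    have hsq : (η * ℓ t i) ^ 2 ≤ η ^ 2 := by
      rw [mul_pow]
      exact mul_le_of_le_one_right (sq_nonneg η) <| sq_le_one_iff_abs_le_one _ |>.mpr <|
        h.abs_loss_le_one t (by omega) (h.dist_mem_stdSimplex hw) i
    calc exp (-η * ∑ s ∈ range (t + 1), ℓ s i - η ^ 2 * ↑(t + 1))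
        ≤ exp (-η * ∑ s ∈ range t, ℓ s i - η ^ 2 * t) * exp (-(η * ℓ t i) - (η * ℓ t i) ^ 2) := by
          rw [← exp_add]; gcongr; push_cast; rw [sum_range_succ]; nlinarith
      _ ≤ w t i * (1 - η * ℓ t i) := by
          exact mul_le_mul (h.exp_le_weight hη hη2 i t (by omega))
            (exp_neg_sub_sq_le_one_sub hstep) (exp_pos _).le (hw i).le
      _ = w (t + 1) i := (h.weight_succ t (by omega) i).symm

theorem expert_regret_le (h : IsMultiplicativeWeightsRun η T ℓ w p) (hη : 0 < η)
    (hη2 : η ≤ 1 / 2) (i : ι) :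
    ∑ t ∈ range T, ∑ j, p t j * ℓ t j - ∑ t ∈ range T, ℓ t i ≤
      log (Fintype.card ι) / η + η * T := by
  have hcard : (0 : ℝ) < Fintype.card ι := by exact_mod_cast Fintype.card_pos
  have hpot : exp (-η * ∑ t ∈ range T, ℓ t i - η ^ 2 * T) ≤
      exp (log (Fintype.card ι) - η * ∑ t ∈ range T, ∑ j, p t j * ℓ t j) :=
    calc _ ≤ w T i := h.exp_le_weight hη.le hη2 i T le_rfl
      _ ≤ ∑ j, w T j :=
          single_le_sum (fun j _ => (h.weight_pos hη.le hη2 T le_rfl j).le) (mem_univ i)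
      _ ≤ _ := h.sum_weight_le hη.le hη2 T le_rfl
      _ = _ := by rw [sub_eq_add_neg, exp_add, exp_log hcard, neg_mul]
  rw [exp_le_exp] at hpot
  calc _ ≤ (log (Fintype.card ι) + η ^ 2 * T) / η := by rw [le_div_iff₀' hη]; linarith
    _ = _ := by field_simp

theorem regret_le (h : IsMultiplicativeWeightsRun η T ℓ w p) (hη : 0 < η) (hη2 : η ≤ 1 / 2)
    {q : ι → ℝ} (hq : q ∈ stdSimplex ℝ ι) :
    ∑ t ∈ range T, ∑ i, (p t i - q i) * ℓ t i ≤ log (Fintype.card ι) / η + η * T := by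
  calc _ = ∑ t ∈ range T, ∑ j, p t j * ℓ t j - ∑ t ∈ range T, ∑ i, q i * ℓ t i := by
        simp only [sub_mul, sum_sub_distrib]
    _ = ∑ i, q i * (∑ t ∈ range T, ∑ j, p t j * ℓ t j) - ∑ i, q i * ∑ t ∈ range T, ℓ t i := by
      rw [← sum_mul, hq.2, one_mul]
      simp only [mul_sum]
      rw [sum_comm (s := univ)]
    _ = ∑ i, q i * (∑ t ∈ range T, ∑ j, p t j * ℓ t j - ∑ t ∈ range T, ℓ t i) := by
      simp only [mul_sub, sum_sub_distrib]
    _ ≤ ∑ i, q i * (log (Fintype.card ι) / η + η * T) := by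
      gcongr with i
      · exact hq.1 i
      · exact h.expert_regret_le hη hη2 i
    _ = _ := by rw [← sum_mul, hq.2, one_mul]

end IsMultiplicativeWeightsRun

/-- Multiplicative Weights regret theorem: with `η = √(log n / T) ≤ 1/2`, convex
differentiable cost functions `fₜ` whose gradients are bounded by `G` in the
`ℓ∞` norm on the simplex, the MW iterates `xₜ` satisfy
`∑ₜ fₜ(xₜ) − min_{x ∈ Sₙ} ∑ₜ fₜ(x) ≤ ηTG + (G log n)/η = 2G√(T log n)`. -/
theorem multiplicativeWeights_regret {n : ℕ} (hn : 2 ≤ n) (T : ℕ) (hT : 1 ≤ T)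
    (G η : ℝ) (hG : 0 < G)
    (hη : η = Real.sqrt (Real.log n / T)) (hη2 : η ≤ 1 / 2)
    (f : ℕ → EuclideanSpace ℝ (Fin n) → ℝ)
    (hfconv : ∀ t, ConvexOn ℝ Set.univ (f t))
    (g : ℕ → EuclideanSpace ℝ (Fin n) → EuclideanSpace ℝ (Fin n))
    (hgrad : ∀ t x, HasGradientAt (f t) (g t x) x)
    (hgb : ∀ t, t < T → ∀ x : EuclideanSpace ℝ (Fin n),
      (∀ i, 0 ≤ x i) → (∑ i, x i) = 1 → ∀ i, |g t x i| ≤ G)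
    (w : ℕ → Fin n → ℝ) (hw0 : ∀ i, w 0 i = 1)
    (x : ℕ → EuclideanSpace ℝ (Fin n)) (hx : ∀ t i, x t i = w t i / ∑ k, w t k)
    (hw : ∀ t, t < T → ∀ i, w (t + 1) i = w t i * (1 - η * g t (x t) i / G)) :
    (∀ xstar : EuclideanSpace ℝ (Fin n), (∀ i, 0 ≤ xstar i) → (∑ i, xstar i) = 1 →
      ∑ t ∈ Finset.range T, f t (x t) ≤
        (∑ t ∈ Finset.range T, f t xstar) + (η * T * G + G * Real.log n / η)) ∧
    η * T * G + G * Real.log n / η = 2 * G * Real.sqrt (T * Real.log n) := by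
  have hlog : 0 < log n := log_pos (by exact_mod_cast hn)
  have hηpos : 0 < η := hη ▸ sqrt_pos.2 (div_pos hlog (by exact_mod_cast hT))
  have : Nonempty (Fin n) := ⟨⟨0, by omega⟩⟩
  set ℓ : ℕ → Fin n → ℝ := fun t i => g t (x t) i / G
  have hrun : IsMultiplicativeWeightsRun η T ℓ w (fun t i => x t i) :=
    { weight_zero := hw0
      weight_succ := fun t ht i => by rw [hw t ht i, mul_div_assoc]
      dist_eq := hx
      abs_loss_le_one := fun t ht hxt i => by
        rw [abs_div, abs_of_pos hG, div_le_one hG]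
        exact hgb t ht _ hxt.1 hxt.2 i }
  refine ⟨fun xstar hxstar0 hxstar1 => ?_, ?_⟩
  · have hlin : ∀ t ∈ range T, f t (x t) - f t xstar ≤ G * ∑ i, (x t i - xstar i) * ℓ t i :=
      fun t _ => calc
        _ ≤ ∑ i, (x t i - xstar i) * g t (x t) i :=
          (hfconv t).sub_le_sum_sub_mul_gradient (Set.mem_univ _) (Set.mem_univ _) (hgrad t (x t))
        _ = _ := by simp only [ℓ, mul_sum]; field_simp
    have hmw := hrun.regret_le hηpos hη2 ⟨hxstar0, hxstar1⟩
    rw [Fintype.card_fin] at hmw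
    have hsum := sum_le_sum hlin
    rw [sum_sub_distrib, ← mul_sum] at hsum
    have hbound : G * (log n / η + η * T) = η * T * G + G * log n / η := by ring
    linarith [mul_le_mul_of_nonneg_left hmw hG.le]
  · calc _ = G * (η * T + log n / η) := by ring
      _ = _ := by rw [hη, sqrt_div_mul_add_div_sqrt_div hlog.le (Nat.cast_nonneg T)]; ring
end

section
/- Let n ≥ 1, y ∈ ℝ^n, and let a ∈ ℝ satisfy Σ_{i=1}^n max{y_i − a, 0} = 1. Define x ∈ ℝ^n by x_i = max{y_i − a, 0}. Then x ∈ S_n, and x is the Euclidean projection of y onto S_n: for every z ∈ S_n, ‖y − x‖_2 ≤ ‖y − z‖_2, with equality only if z = x. -/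
/-- Correctness of `SimplexProject`: if `a` satisfies `∑ᵢ max{yᵢ − a, 0} = 1` and
`xᵢ = max{yᵢ − a, 0}`, then `x` lies in the simplex and is the Euclidean projection
of `y` onto the simplex: `‖y − x‖₂ ≤ ‖y − z‖₂` for all `z ∈ Sₙ`, with equality
only if `z = x`. -/
theorem simplexProject_correct {n : ℕ} (hn : 1 ≤ n) (y : Fin n → ℝ) (a : ℝ)
    (ha : ∑ i, max (y i - a) 0 = 1)
    (x : Fin n → ℝ) (hx : ∀ i, x i = max (y i - a) 0) :
    x ∈ stdSimplex ℝ (Fin n) ∧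
      ∀ z ∈ stdSimplex ℝ (Fin n),
        Real.sqrt (∑ i, (y i - x i) ^ 2) ≤ Real.sqrt (∑ i, (y i - z i) ^ 2) ∧
        (Real.sqrt (∑ i, (y i - x i) ^ 2) = Real.sqrt (∑ i, (y i - z i) ^ 2) →
          z = x) := by
  have hx0 : ∀ i, 0 ≤ x i := fun i => (hx i) ▸ le_max_right _ _
  have hxsum : ∑ i, x i = 1 := by
    rw [Finset.sum_congr rfl fun i _ => hx i]; exact ha
  refine ⟨⟨hx0, hxsum⟩, ?_⟩
  rintro z ⟨hz0, hzsum⟩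
  have key : 0 ≤ ∑ i, (y i - x i) * (x i - z i) := by
    have h1 : ∀ i, a * (x i - z i) ≤ (y i - x i) * (x i - z i) := by
      intro i
      rcases le_or_gt (y i - a) 0 with h | h
      · have hxi : x i = 0 := by rw [hx i]; exact max_eq_right h
        rw [hxi]
        nlinarith [hz0 i]
      · have hxi : x i = y i - a := by rw [hx i]; exact max_eq_left h.le
        rw [hxi]; nlinarith
    calc (0 : ℝ) = a * ∑ i, (x i - z i) := by
          rw [Finset.sum_sub_distrib, hxsum, hzsum]; ring
      _ = ∑ i, a * (x i - z i) := Finset.mul_sum _ _ _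
      _ ≤ _ := Finset.sum_le_sum fun i _ => h1 i
  have hB : 0 ≤ ∑ i, (x i - z i) ^ 2 := Finset.sum_nonneg fun i _ => sq_nonneg _
  have expand : ∑ i, (y i - z i) ^ 2 =
      ∑ i, (y i - x i) ^ 2 + 2 * ∑ i, (y i - x i) * (x i - z i)
        + ∑ i, (x i - z i) ^ 2 := by
    rw [Finset.mul_sum, ← Finset.sum_add_distrib, ← Finset.sum_add_distrib]
    exact Finset.sum_congr rfl fun i _ => by ring
  have hA : 0 ≤ ∑ i, (y i - x i) ^ 2 := Finset.sum_nonneg fun i _ => sq_nonneg _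
  have hC : 0 ≤ ∑ i, (y i - z i) ^ 2 := Finset.sum_nonneg fun i _ => sq_nonneg _
  have hle : ∑ i, (y i - x i) ^ 2 ≤ ∑ i, (y i - z i) ^ 2 := by
    rw [expand]; linarith
  refine ⟨Real.sqrt_le_sqrt hle, fun heq => ?_⟩
  have hsum_eq : ∑ i, (y i - x i) ^ 2 = ∑ i, (y i - z i) ^ 2 :=
    (Real.sqrt_inj hA hC).mp heq
  have hB0 : ∑ i, (x i - z i) ^ 2 = 0 := by linarith [expand, hsum_eq]
  funext i
  have := (Finset.sum_eq_zero_iff_of_nonneg fun i _ => sq_nonneg (x i - z i)).mp hB0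
    i (Finset.mem_univ i)
  have := pow_eq_zero_iff (n := 2) (by norm_num) |>.mp this
  linarith
end

section
/- Let P ⊆ ℝ^n be a convex set, m ≥ 2, ω > 0, and let f_1, …, f_m : P → ℝ be convex functions with |f_j(x)| ≤ ω for all x ∈ P and all j. Fix T ≥ 1 and 0 < η ≤ 1/2, and define the dual Multiplicative Weights dynamics: u^1_j = 1, p_t = u^t / Σ_j u^t_j ∈ S_m, and u^{t+1}_j = u^t_j · (1 + η f_j(x_t)/ω), where x_1, …, x_T ∈ P is any sequence of points satisfying Σ_{j=1}^m p_t(j) f_j(x_t) ≤ 0 for every t (the optimization oracle succeeds at every step). Then the average x̄ = (1/T) Σ_{t=1}^T x_t satisfies f_j(x̄) ≤ ηω + (ω log m)/(ηT) for every j ∈ [m]. In particular, taking η = √(log m / T) with T ≥ 4ω² log m / ε² (so that η ≤ 1/2), the point x̄ is an ε-approximate solution: f_j(x̄) ≤ ε for all j. -/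
/-!
Track the Multiplicative Weights potential `Φₜ = ∑ⱼ uᵗⱼ`. Because the oracle answers every
distribution `pₜ` with a point of nonpositive average loss, `Φ` never increases, so
`uᵀⱼ ≤ Φ₀ = m` for every `j`. On the other hand `uᵀⱼ = ∏ₜ (1 + η fⱼ(xₜ)/ω)`, and
`log (1 + z) ≥ z - z²` turns `log uᵀⱼ ≤ log m` into `∑ₜ fⱼ(xₜ) ≤ ω log m / η + η ω T`.
Jensen's inequality for the convex `fⱼ` transfers this bound to the average point `x̄`.
-/

open Finset Real

lemma Real.sub_sq_le_log_one_add {z : ℝ} (hz : -1 / 2 ≤ z) : z - z ^ 2 ≤ log (1 + z) := by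
  rcases le_total 0 z with hz0 | hz0
  · calc z - z ^ 2 ≤ 2 * z / (z + 2) := by rw [le_div_iff₀ (by linarith)]; nlinarith
      _ ≤ log (1 + z) := le_log_one_add_of_nonneg hz0
  · -- `(1 + z) · exp (z² - z) ≥ 1`, already from the quadratic Taylor bound of `exp`
    have hexp := quadratic_le_exp_of_nonneg (show 0 ≤ z ^ 2 - z by nlinarith)
    rw [le_log_iff_exp_le (by linarith), show z - z ^ 2 = -(z ^ 2 - z) by ring, exp_neg,
      inv_le_iff_one_le_mul₀ (exp_pos _)]
    nlinarith [mul_le_mul_of_nonneg_left hexp (show 0 ≤ 1 + z by linarith)]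

section Average

variable {ι E : Type*} [AddCommGroup E] [Module ℝ E] {P : Set E} {s : Finset ι} {x : ι → E}

lemma Convex.inv_card_smul_sum_mem (hP : Convex ℝ P) (hs : s.Nonempty)
    (hx : ∀ i ∈ s, x i ∈ P) : (#s : ℝ)⁻¹ • ∑ i ∈ s, x i ∈ P := by
  rw [smul_sum]
  refine hP.sum_mem (fun _ _ => by positivity) ?_ hx
  rw [sum_const, nsmul_eq_mul, mul_inv_cancel₀ (by simpa using hs.ne_empty)]

lemma ConvexOn.map_inv_card_smul_sum_le {f : E → ℝ} (hf : ConvexOn ℝ P f) (hs : s.Nonempty)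
    (hx : ∀ i ∈ s, x i ∈ P) :
    f ((#s : ℝ)⁻¹ • ∑ i ∈ s, x i) ≤ (#s : ℝ)⁻¹ * ∑ i ∈ s, f (x i) := by
  rw [smul_sum, mul_sum]
  refine hf.map_sum_le (fun _ _ => by positivity) ?_ hx
  rw [sum_const, nsmul_eq_mul, mul_inv_cancel₀ (by simpa using hs.ne_empty)]

end Average

lemma sum_mul_nonpos_of_sum_div_sum_mul_nonpos {ι : Type*} [Fintype ι] {w g : ι → ℝ}
    (hw : ∀ i, 0 ≤ w i) (h : ∑ i, w i / (∑ k, w k) * g i ≤ 0) : ∑ i, w i * g i ≤ 0 := by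
  rcases (sum_nonneg fun i (_ : i ∈ univ) => hw i).eq_or_lt with hzero | hpos
  · have hw0 := (sum_eq_zero_iff_of_nonneg fun i _ => hw i).1 hzero.symm
    simp [hw0]
  · simpa only [div_mul_eq_mul_div, ← sum_div, div_le_iff₀ hpos, zero_mul] using h

namespace MultiplicativeWeights

variable {ι : Type*} (η : ℝ) (ℓ : ℕ → ι → ℝ)

def weight (t : ℕ) (j : ι) : ℝ := ∏ s ∈ range t, (1 + η * ℓ s j)

noncomputable def distribution [Fintype ι] (t : ℕ) (j : ι) : ℝ :=
  weight η ℓ t j / ∑ k, weight η ℓ t k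

variable {η ℓ} {T : ℕ}

lemma eq_weight_of_recursion {u : ℕ → ι → ℝ} (hu0 : ∀ j, u 0 j = 1)
    (hu : ∀ t < T, ∀ j, u (t + 1) j = u t j * (1 + η * ℓ t j)) :
    ∀ t ≤ T, ∀ j, u t j = weight η ℓ t j := by
  intro t
  induction t with
  | zero => simp [hu0, weight]
  | succ t ih =>
    intro ht j
    rw [hu t ht j, ih (by omega) j, weight, weight, prod_range_succ]

lemma weight_pos_s16 (hη₀ : 0 ≤ η) (hη : η < 1) (hℓ : ∀ t < T, ∀ i, |ℓ t i| ≤ 1) (i : ι) :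
    0 < weight η ℓ T i :=
  prod_pos fun t ht => by
    have := neg_le_of_abs_le (hℓ t (mem_range.1 ht) i)
    nlinarith

lemma sum_sub_sq_le_log_weight (hη₀ : 0 ≤ η) (hη : η ≤ 1 / 2) (j : ι)
    (hℓ : ∀ t < T, |ℓ t j| ≤ 1) :
    η * ∑ t ∈ range T, ℓ t j - η ^ 2 * T ≤ log (weight η ℓ T j) := by
  have hbound : ∀ t ∈ range T, -1 / 2 ≤ η * ℓ t j ∧ (η * ℓ t j) ^ 2 ≤ η ^ 2 := fun t ht => by
    have hℓt := hℓ t (mem_range.1 ht)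
    refine ⟨by nlinarith [neg_le_of_abs_le hℓt], ?_⟩
    rw [mul_pow]
    exact mul_le_of_le_one_right (sq_nonneg η) ((sq_le_one_iff_abs_le_one _).2 hℓt)
  rw [weight, log_prod fun t ht => by linarith [(hbound t ht).1], mul_sum]
  calc ∑ t ∈ range T, η * ℓ t j - η ^ 2 * T
      = ∑ t ∈ range T, (η * ℓ t j - η ^ 2) := by simp [sum_sub_distrib, mul_comm]
    _ ≤ ∑ t ∈ range T, ((η * ℓ t j) - (η * ℓ t j) ^ 2) :=
        sum_le_sum fun t ht => by linarith [(hbound t ht).2]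
    _ ≤ ∑ t ∈ range T, log (1 + η * ℓ t j) :=
        sum_le_sum fun t ht => sub_sq_le_log_one_add (hbound t ht).1

variable [Fintype ι]

lemma sum_weight_succ (t : ℕ) :
    ∑ j, weight η ℓ (t + 1) j = ∑ j, weight η ℓ t j + η * ∑ j, weight η ℓ t j * ℓ t j := by
  simp only [weight, prod_range_succ, mul_sum, ← sum_add_distrib]
  exact sum_congr rfl fun _ _ => by ring

lemma sum_weight_le_card (hη₀ : 0 ≤ η) (hη : η < 1) (hℓ : ∀ t < T, ∀ i, |ℓ t i| ≤ 1)
    (hloss : ∀ t < T, ∑ i, distribution η ℓ t i * ℓ t i ≤ 0) :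
    ∑ i, weight η ℓ T i ≤ Fintype.card ι := by
  induction T with
  | zero => simp [weight]
  | succ T ih =>
    have hℓ' : ∀ t < T, ∀ i, |ℓ t i| ≤ 1 := fun t ht => hℓ t (by omega)
    have hgain : ∑ i, weight η ℓ T i * ℓ T i ≤ 0 :=
      sum_mul_nonpos_of_sum_div_sum_mul_nonpos (fun i => (weight_pos_s16 hη₀ hη hℓ' i).le)
        (hloss T T.lt_succ_self)
    rw [sum_weight_succ]
    nlinarith [ih hℓ' fun t ht => hloss t (by omega)]

theorem regret_bound (hη₀ : 0 ≤ η) (hη : η ≤ 1 / 2) (hℓ : ∀ t < T, ∀ i, |ℓ t i| ≤ 1)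
    (hloss : ∀ t < T, ∑ i, distribution η ℓ t i * ℓ t i ≤ 0) (j : ι) :
    η * ∑ t ∈ range T, ℓ t j - η ^ 2 * T ≤ log (Fintype.card ι) := by
  have hpos := weight_pos_s16 hη₀ (by linarith) hℓ
  calc η * ∑ t ∈ range T, ℓ t j - η ^ 2 * T ≤ log (weight η ℓ T j) :=
        sum_sub_sq_le_log_weight hη₀ hη j fun t ht => hℓ t ht j
    _ ≤ log (∑ i, weight η ℓ T i) :=
        log_le_log (hpos j) (single_le_sum (fun i _ => (hpos i).le) (mem_univ j))
    _ ≤ log (Fintype.card ι) :=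
        log_le_log (sum_pos (fun i _ => hpos i) ⟨j, mem_univ j⟩)
          (sum_weight_le_card hη₀ (by linarith) hℓ hloss)

end MultiplicativeWeights

lemma mul_add_div_mul_le_of_eq_sqrt {η ω L T ε : ℝ} (hη₀ : 0 < η) (hω : 0 < ω) (hT : 0 < T)
    (hε : 0 < ε) (hηL : η = √(L / T)) (hTε : 4 * ω ^ 2 * L / ε ^ 2 ≤ T) :
    η * ω + ω * L / (η * T) ≤ ε := by
  have hL : L = η ^ 2 * T := by
    rw [hηL, sq_sqrt (sqrt_pos.1 (hηL ▸ hη₀)).le, div_mul_cancel₀ _ hT.ne']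
  have hsq : (2 * ω * η) ^ 2 ≤ ε ^ 2 := by
    rw [div_le_iff₀ (by positivity), hL] at hTε
    nlinarith
  calc η * ω + ω * L / (η * T) = 2 * ω * η := by rw [hL]; field_simp; ring
    _ ≤ ε := (pow_le_pow_iff_left₀ (by positivity) hε.le two_ne_zero).1 hsq

open MultiplicativeWeights in
theorem dualMW_width_bound_general {n m : ℕ} (T : ℕ) (hT : 1 ≤ T)
    (P : Set (Fin n → ℝ)) (hP : Convex ℝ P)
    (f : Fin m → (Fin n → ℝ) → ℝ) (hfconv : ∀ j, ConvexOn ℝ P (f j))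
    (ω : ℝ) (hω : 0 < ω) (hfb : ∀ j, ∀ x ∈ P, |f j x| ≤ ω)
    (η : ℝ) (hη₀ : 0 < η) (hη : η ≤ 1 / 2)
    (x : ℕ → Fin n → ℝ) (hx : ∀ t, t < T → x t ∈ P)
    (u : ℕ → Fin m → ℝ) (hu0 : ∀ j, u 0 j = 1)
    (p : ℕ → Fin m → ℝ) (hp : ∀ t j, p t j = u t j / ∑ k, u t k)
    (hu : ∀ t, t < T → ∀ j, u (t + 1) j = u t j * (1 + η * f j (x t) / ω))
    (horacle : ∀ t, t < T → ∑ j, p t j * f j (x t) ≤ 0) :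
    ((T : ℝ)⁻¹ • ∑ t ∈ Finset.range T, x t) ∈ P ∧
    (∀ j, f j ((T : ℝ)⁻¹ • ∑ t ∈ Finset.range T, x t) ≤
        η * ω + ω * Real.log m / (η * T)) ∧
    (∀ ε : ℝ, 0 < ε → η = Real.sqrt (Real.log m / T) →
        4 * ω ^ 2 * Real.log m / ε ^ 2 ≤ (T : ℝ) →
        ∀ j, f j ((T : ℝ)⁻¹ • ∑ t ∈ Finset.range T, x t) ≤ ε) := by
  set ℓ : ℕ → Fin m → ℝ := fun t j => f j (x t) / ω
  have hTpos : (0 : ℝ) < T := by exact_mod_cast hT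
  have hrange : (range T).Nonempty := nonempty_range_iff.2 (by omega)
  have hxP : ∀ t ∈ range T, x t ∈ P := fun t ht => hx t (mem_range.1 ht)
  have hℓ : ∀ t < T, ∀ j, |ℓ t j| ≤ 1 := fun t ht j => by
    rw [abs_div, abs_of_pos hω, div_le_one hω]; exact hfb j _ (hx t ht)
  have hweight := eq_weight_of_recursion (η := η) (ℓ := ℓ) hu0 fun t ht j => by
    rw [hu t ht j, mul_div_assoc]
  have hloss : ∀ t < T, ∑ j, distribution η ℓ t j * ℓ t j ≤ 0 := fun t ht => by
    simp only [distribution, ℓ, ← hweight t ht.le, ← hp, mul_div_assoc', ← sum_div]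
    exact div_nonpos_of_nonpos_of_nonneg (horacle t ht) hω.le
  have hbound : ∀ j, f j ((T : ℝ)⁻¹ • ∑ t ∈ range T, x t) ≤ η * ω + ω * log m / (η * T) := by
    intro j
    have hregret := regret_bound hη₀.le hη hℓ hloss j
    simp only [ℓ, ← sum_div, Fintype.card_fin] at hregret
    calc f j ((T : ℝ)⁻¹ • ∑ t ∈ range T, x t) ≤ (T : ℝ)⁻¹ * ∑ t ∈ range T, f j (x t) := by
          simpa using (hfconv j).map_inv_card_smul_sum_le hrange hxP
      _ ≤ η * ω + ω * log m / (η * T) := by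
          rw [inv_mul_le_iff₀ hTpos]
          field_simp at hregret ⊢
          nlinarith
  refine ⟨by simpa using hP.inv_card_smul_sum_mem hrange hxP, hbound, ?_⟩
  intro ε hε hηε hTε j
  exact (hbound j).trans (mul_add_div_mul_le_of_eq_sqrt hη₀ hω hTpos hε hηε hTε)

/-- The classical lagrangian-relaxation guarantee (`DualGameOpt` instantiated with
Multiplicative Weights): with `u¹ⱼ = 1`, `pₜ = uᵗ/∑ⱼ uᵗⱼ`,
`uᵗ⁺¹ⱼ = uᵗⱼ (1 + η fⱼ(xₜ)/ω)`, and any points `xₜ ∈ P` with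
`∑ⱼ pₜ(j) fⱼ(xₜ) ≤ 0` at every step, the average `x̄ = (1/T) ∑ₜ xₜ` satisfies
`fⱼ(x̄) ≤ ηω + (ω log m)/(ηT)` for all `j`; in particular, for
`η = √(log m / T)` and `T ≥ 4ω² log m / ε²` it is an `ε`-approximate solution. -/
theorem dualMW_width_bound {n m : ℕ} (hm : 2 ≤ m) (T : ℕ) (hT : 1 ≤ T)
    (P : Set (Fin n → ℝ)) (hP : Convex ℝ P)
    (f : Fin m → (Fin n → ℝ) → ℝ) (hfconv : ∀ j, ConvexOn ℝ P (f j))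
    (ω : ℝ) (hω : 0 < ω) (hfb : ∀ j, ∀ x ∈ P, |f j x| ≤ ω)
    (η : ℝ) (hη₀ : 0 < η) (hη : η ≤ 1 / 2)
    (x : ℕ → Fin n → ℝ) (hx : ∀ t, t < T → x t ∈ P)
    (u : ℕ → Fin m → ℝ) (hu0 : ∀ j, u 0 j = 1)
    (p : ℕ → Fin m → ℝ) (hp : ∀ t j, p t j = u t j / ∑ k, u t k)
    (hu : ∀ t, t < T → ∀ j, u (t + 1) j = u t j * (1 + η * f j (x t) / ω))
    (horacle : ∀ t, t < T → ∑ j, p t j * f j (x t) ≤ 0) :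
    ((T : ℝ)⁻¹ • ∑ t ∈ Finset.range T, x t) ∈ P ∧
    (∀ j, f j ((T : ℝ)⁻¹ • ∑ t ∈ Finset.range T, x t) ≤
        η * ω + ω * Real.log m / (η * T)) ∧
    (∀ ε : ℝ, 0 < ε → η = Real.sqrt (Real.log m / T) →
        4 * ω ^ 2 * Real.log m / ε ^ 2 ≤ (T : ℝ) →
        ∀ j, f j ((T : ℝ)⁻¹ • ∑ t ∈ Finset.range T, x t) ≤ ε) :=
  dualMW_width_bound_general T hT P hP f hfconv ω hω hfb η hη₀ hη x hx u hu0 p hp hu horacle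
end

section
/- Let H, G, ε > 0 and let f_1, …, f_m : ℝ^n → ℝ be differentiable functions that are H-strongly convex, with ‖∇f_j(x)‖_2 ≤ G for all x ∈ S_n and all j. Consider the projected online gradient descent dynamics on the simplex: x_1 ∈ S_n arbitrary; at step t, if f_j(x_t) ≤ ε for all j ∈ [m] the algorithm halts with output x_t; otherwise some index j_t with f_{j_t}(x_t) > ε is chosen, and x_{t+1} is set to the Euclidean projection onto S_n of y_{t+1} = x_t − (1/(H t)) ∇f_{j_t}(x_t). If the program is feasible, i.e., there exists x* ∈ S_n with f_j(x*) ≤ 0 for all j, then for every T ≥ 1 with (G²/(2H))(1 + log T) < εT, the algorithm halts at some step t ≤ T; consequently it returns an ε-approximate solution within O((G²/(Hε)) log(G²/(Hε))) iterations. -/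
open Set
open scoped RealInnerProductSpace

/-! If the dynamics run for `T` steps without halting and `x*` is feasible, the selected constraint
`f` satisfies `f(x_t) - f(x*) > ε` at every step. For an `H`-strongly convex `f` and step size
`1/(H(t+1))`, the online-gradient-descent estimate bounds `f(x_t) - f(x*)` by
`Φ_t - Φ_{t+1} + G²/(2H(t+1))` with the potential `Φ_t = (H t / 2) ‖x_t - x*‖²`. Summing over
`t < T` the potential telescopes from `Φ_0 = 0`, so `ε T ≤ (G²/(2H)) (1 + 1/2 + ⋯ + 1/T)
≤ (G²/(2H)) (1 + log T)`, contradicting the choice of `T`. -/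

section GradientStep

variable {E : Type*} [NormedAddCommGroup E]

lemma ConvexOn.add_apply_sub_le_of_hasFDerivAt [NormedSpace ℝ E] {s : Set E} {φ : E → ℝ}
    {φ' : E →L[ℝ] ℝ} {x y : E} (hφ : ConvexOn ℝ s φ) (hd : HasFDerivAt φ φ' x)
    (hx : x ∈ s) (hy : y ∈ s) : φ x + φ' (y - x) ≤ φ y := by
  have hline : HasDerivAt (φ ∘ AffineMap.lineMap (k := ℝ) x y) (φ' (y - x)) 0 :=
    (by simpa using hd : HasFDerivAt φ φ' (AffineMap.lineMap x y (0 : ℝ))).comp_hasDerivAt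
      (0 : ℝ) AffineMap.hasDerivAt_lineMap
  have := (hφ.comp_affineMap (AffineMap.lineMap (k := ℝ) x y)).le_slope_of_hasDerivAt
    (by simpa using hx) (by simpa using hy) zero_lt_one hline
  simp only [slope_def_field, Function.comp_apply, AffineMap.lineMap_apply_zero,
    AffineMap.lineMap_apply_one, sub_zero, div_one] at this
  linarith

variable [InnerProductSpace ℝ E]

lemma Convex.norm_sub_le_of_forall_norm_sub_le {K : Set E} (hK : Convex ℝ K) {y p z : E}
    (hp : p ∈ K) (hz : z ∈ K) (hmin : ∀ w ∈ K, ‖y - p‖ ≤ ‖y - w‖) : ‖p - z‖ ≤ ‖y - z‖ := by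
  have : Nonempty K := ⟨⟨p, hp⟩⟩
  have hinf : ‖y - p‖ = ⨅ w : K, ‖y - w‖ :=
    le_antisymm (le_ciInf fun w => hmin w w.2)
      (ciInf_le (f := fun w : K => ‖y - w‖) ⟨0, by rintro _ ⟨w, rfl⟩; positivity⟩ ⟨p, hp⟩)
  have hobtuse := (norm_eq_iInf_iff_real_inner_le_zero hK hp).mp hinf z hz
  have hexpand : ‖y - z‖ ^ 2 = ‖y - p‖ ^ 2 - 2 * ⟪y - p, z - p⟫ + ‖p - z‖ ^ 2 := by
    rw [show y - z = (y - p) - (z - p) by abel, norm_sub_sq_real, norm_sub_rev z p]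
  refine (pow_le_pow_iff_left₀ (norm_nonneg _) (norm_nonneg _) two_ne_zero).mp ?_
  linarith [sq_nonneg ‖y - p‖]

lemma Convex.norm_sub_sq_le_of_projected_step {K : Set E} (hK : Convex ℝ K) {x g p z : E}
    {η : ℝ} (hp : p ∈ K) (hz : z ∈ K) (hproj : ∀ w ∈ K, ‖x - η • g - p‖ ≤ ‖x - η • g - w‖) :
    ‖p - z‖ ^ 2 ≤ ‖x - z‖ ^ 2 - 2 * η * ⟪g, x - z⟫ + η ^ 2 * ‖g‖ ^ 2 := by
  have hclose := hK.norm_sub_le_of_forall_norm_sub_le hp hz hproj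
  calc ‖p - z‖ ^ 2 ≤ ‖(x - z) - η • g‖ ^ 2 := by
        rw [show (x - z) - η • g = x - η • g - z by abel]; gcongr
    _ = ‖x - z‖ ^ 2 - 2 * η * ⟪g, x - z⟫ + η ^ 2 * ‖g‖ ^ 2 := by
        rw [norm_sub_sq_real, real_inner_smul_right, norm_smul, Real.norm_eq_abs, mul_pow,
          sq_abs, real_inner_comm]
        ring

variable [CompleteSpace E]

lemma StrongConvexOn.add_inner_add_le_of_hasGradientAt {s : Set E} {f : E → ℝ} {m : ℝ}
    {g x y : E} (hf : StrongConvexOn s m f) (hg : HasGradientAt f g x) (hx : x ∈ s)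
    (hy : y ∈ s) : f x + ⟪g, y - x⟫ + m / 2 * ‖y - x‖ ^ 2 ≤ f y := by
  have hd := (hasGradientAt_iff_hasFDerivAt.mp hg).sub
    ((hasStrictFDerivAt_norm_sq x).hasFDerivAt.const_mul (m / 2))
  have := (strongConvexOn_iff_convex.mp hf).add_apply_sub_le_of_hasFDerivAt hd hx hy
  simp only [sub_apply, smul_apply, InnerProductSpace.toDual_apply_apply, innerSL_apply_apply,
    smul_eq_mul, nsmul_eq_mul, Nat.cast_ofNat, inner_sub_right, real_inner_self_eq_norm_sq] at this
  rw [norm_sub_sq_real, inner_sub_right, real_inner_comm x y]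
  linarith

/-- The per-step regret bound of online gradient descent for strongly convex losses
(Hazan, Agarwal, Kale). -/
lemma StrongConvexOn.sub_le_of_projected_gradient_step {K : Set E} {f : E → ℝ}
    {H G η : ℝ} {g x z p : E} (hf : StrongConvexOn K H f) (hη : 0 < η)
    (hg : HasGradientAt f g x) (hgG : ‖g‖ ≤ G) (hx : x ∈ K) (hz : z ∈ K) (hp : p ∈ K)
    (hproj : ∀ w ∈ K, ‖x - η • g - p‖ ≤ ‖x - η • g - w‖) :
    f x - f z ≤ (η⁻¹ - H) / 2 * ‖x - z‖ ^ 2 - η⁻¹ / 2 * ‖p - z‖ ^ 2 + η / 2 * G ^ 2 := by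
  have hfirst := hf.add_inner_add_le_of_hasGradientAt hg hx hz
  have hstep := hf.1.norm_sub_sq_le_of_projected_step hp hz hproj
  have hgG2 : ‖g‖ ^ 2 ≤ G ^ 2 := by gcongr
  rw [← neg_sub x z, inner_neg_right, norm_neg] at hfirst
  have hkey : 2 * η * (f x - f z) ≤
      ‖x - z‖ ^ 2 - H * η * ‖x - z‖ ^ 2 - ‖p - z‖ ^ 2 + η ^ 2 * G ^ 2 := by
    linarith [mul_le_mul_of_nonneg_left hfirst hη.le,
      mul_le_mul_of_nonneg_left hgG2 (sq_nonneg η)]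
  field_simp
  linarith

lemma StrongConvexOn.sub_le_of_projected_gradient_step_inv_succ {K : Set E} {f : E → ℝ}
    {H G τ : ℝ} {g x z p : E} (hf : StrongConvexOn K H f) (hH : 0 < H) (hτ : 0 ≤ τ)
    (hg : HasGradientAt f g x) (hgG : ‖g‖ ≤ G) (hx : x ∈ K) (hz : z ∈ K) (hp : p ∈ K)
    (hproj : ∀ w ∈ K, ‖x - (1 / (H * (τ + 1))) • g - p‖ ≤ ‖x - (1 / (H * (τ + 1))) • g - w‖) :
    f x - f z ≤ H * τ / 2 * ‖x - z‖ ^ 2 - H * (τ + 1) / 2 * ‖p - z‖ ^ 2 +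
      G ^ 2 / (2 * H) * (τ + 1)⁻¹ := by
  have h := hf.sub_le_of_projected_gradient_step (by positivity) hg hgG hx hz hp hproj
  have hstepsize : (H * (τ + 1))⁻¹ / 2 * G ^ 2 = G ^ 2 / (2 * H) * (τ + 1)⁻¹ := by
    field_simp
  simp only [one_div, inv_inv, hstepsize] at h
  linarith

end GradientStep

lemma convex_simplex_euclideanSpace (n : ℕ) :
    Convex ℝ {x : EuclideanSpace ℝ (Fin n) | (∀ i, 0 ≤ x i) ∧ (∑ i, x i) = 1} :=
  (convex_stdSimplex ℝ (Fin n)).linear_preimage (WithLp.linearEquiv 2 ℝ (Fin n → ℝ)).toLinearMap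

lemma le_sum_range_of_forall_succ_add_le {Φ a : ℕ → ℝ} {ε : ℝ} {T : ℕ}
    (h : ∀ t < T, Φ (t + 1) + ε ≤ Φ t + a t) :
    T * ε + Φ T ≤ Φ 0 + ∑ t ∈ Finset.range T, a t := by
  induction T with
  | zero => simp
  | succ T ih =>
    have hT := h T T.lt_succ_self
    have := ih fun t ht => h t (ht.trans T.lt_succ_self)
    rw [Finset.sum_range_succ]
    push_cast
    linarith

lemma sum_range_inv_succ_le_one_add_log (T : ℕ) :
    ∑ t ∈ Finset.range T, ((t : ℝ) + 1)⁻¹ ≤ 1 + Real.log T := by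
  simpa [harmonic] using harmonic_le_one_add_log T

theorem strictly_convex_opt_general {n m : ℕ} (H G ε : ℝ)
    (hH : 0 < H)
    (S : Set (EuclideanSpace ℝ (Fin n)))
    (hS : S = {x : EuclideanSpace ℝ (Fin n) | (∀ i, 0 ≤ x i) ∧ (∑ i, x i) = 1})
    (f : Fin m → EuclideanSpace ℝ (Fin n) → ℝ)
    (g : Fin m → EuclideanSpace ℝ (Fin n) → EuclideanSpace ℝ (Fin n))
    (hgrad : ∀ j x, HasGradientAt (f j) (g j x) x)
    (hsc : ∀ j, ConvexOn ℝ Set.univ (fun x => f j x - (H / 2) * ‖x‖ ^ 2))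
    (hgb : ∀ j, ∀ x ∈ S, ‖g j x‖ ≤ G)
    (x : ℕ → EuclideanSpace ℝ (Fin n)) (hx0 : x 0 ∈ S)
    (jsel : ℕ → Fin m)
    (hjsel : ∀ t, (∃ j, ε < f j (x t)) → ε < f (jsel t) (x t))
    (hstep : ∀ t, (∃ j, ε < f j (x t)) →
      x (t + 1) ∈ S ∧
      ∀ z ∈ S, ‖x t - (1 / (H * (t + 1 : ℝ))) • g (jsel t) (x t) - x (t + 1)‖ ≤
        ‖x t - (1 / (H * (t + 1 : ℝ))) • g (jsel t) (x t) - z‖)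
    (hfeas : ∃ xstar ∈ S, ∀ j, f j xstar ≤ 0) :
    ∀ T : ℕ, 1 ≤ T → G ^ 2 / (2 * H) * (1 + Real.log T) < ε * T →
      ∃ t, t < T ∧ ∀ j, f j (x t) ≤ ε := by
  intro T _ hlog
  by_contra! hviol
  obtain ⟨xs, hxs, hxs0⟩ := hfeas
  have hSconv : Convex ℝ S := hS ▸ convex_simplex_euclideanSpace n
  have hmem : ∀ t < T, x t ∈ S := by
    rintro (_ | t) ht
    exacts [hx0, (hstep t (hviol t (by omega))).1]
  have hdecr : ∀ t < T, H * ((t + 1 : ℕ) : ℝ) / 2 * ‖x (t + 1) - xs‖ ^ 2 + ε ≤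
      H * t / 2 * ‖x t - xs‖ ^ 2 + G ^ 2 / (2 * H) * ((t : ℝ) + 1)⁻¹ := by
    intro t ht
    have hregret := StrongConvexOn.sub_le_of_projected_gradient_step_inv_succ
      (strongConvexOn_iff_convex.2 ((hsc (jsel t)).subset (subset_univ S) hSconv))
      hH t.cast_nonneg (hgrad _ _) (hgb _ _ (hmem t ht)) (hmem t ht) hxs
      (hstep t (hviol t ht)).1 (hstep t (hviol t ht)).2
    push_cast
    linarith [hjsel t (hviol t ht), hxs0 (jsel t)]
  have hsum := le_sum_range_of_forall_succ_add_le
    (Φ := fun t => H * t / 2 * ‖x t - xs‖ ^ 2) (a := fun t => G ^ 2 / (2 * H) * ((t : ℝ) + 1)⁻¹)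
    hdecr
  rw [← Finset.mul_sum] at hsum
  have hharm := mul_le_mul_of_nonneg_left (sum_range_inv_succ_le_one_add_log T)
    (by positivity : 0 ≤ G ^ 2 / (2 * H))
  have hpot : 0 ≤ H * (T : ℝ) / 2 * ‖x T - xs‖ ^ 2 := by positivity
  simp only [CharP.cast_eq_zero, mul_zero, zero_div, zero_mul, zero_add] at hsum
  linarith

/-- Main Theorem 1 (strictly convex programs via online gradient descent):
`f₁,…,f_m` are `H`-strongly convex with gradients bounded by `G` on the simplex.
The projected online gradient descent dynamics (0-indexed: step `t` uses learning
rate `1/(H(t+1))`) either halt at some step with an `ε`-approximate solution, or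
perform a projected gradient step on a constraint violated by more than `ε`.
If the program is feasible, then for every `T ≥ 1` with
`(G²/(2H))(1 + log T) < εT`, the algorithm halts at some step `t < T`
(i.e. within the first `T` iterations), returning an `ε`-approximate solution. -/
theorem strictly_convex_opt {n m : ℕ} (H G ε : ℝ)
    (hH : 0 < H) (hG : 0 < G) (hε : 0 < ε)
    (S : Set (EuclideanSpace ℝ (Fin n)))
    (hS : S = {x : EuclideanSpace ℝ (Fin n) | (∀ i, 0 ≤ x i) ∧ (∑ i, x i) = 1})
    (f : Fin m → EuclideanSpace ℝ (Fin n) → ℝ)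
    (g : Fin m → EuclideanSpace ℝ (Fin n) → EuclideanSpace ℝ (Fin n))
    (hgrad : ∀ j x, HasGradientAt (f j) (g j x) x)
    (hsc : ∀ j, ConvexOn ℝ Set.univ (fun x => f j x - (H / 2) * ‖x‖ ^ 2))
    (hgb : ∀ j, ∀ x ∈ S, ‖g j x‖ ≤ G)
    (x : ℕ → EuclideanSpace ℝ (Fin n)) (hx0 : x 0 ∈ S)
    (jsel : ℕ → Fin m)
    (hjsel : ∀ t, (∃ j, ε < f j (x t)) → ε < f (jsel t) (x t))
    (hstep : ∀ t, (∃ j, ε < f j (x t)) →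
      x (t + 1) ∈ S ∧
      ∀ z ∈ S, ‖x t - (1 / (H * (t + 1 : ℝ))) • g (jsel t) (x t) - x (t + 1)‖ ≤
        ‖x t - (1 / (H * (t + 1 : ℝ))) • g (jsel t) (x t) - z‖)
    (hfeas : ∃ xstar ∈ S, ∀ j, f j xstar ≤ 0) :
    ∀ T : ℕ, 1 ≤ T → G ^ 2 / (2 * H) * (1 + Real.log T) < ε * T →
      ∃ t, t < T ∧ ∀ j, f j (x t) ≤ ε :=
  strictly_convex_opt_general H G ε hH S hS f g hgrad hsc hgb x hx0 jsel hjsel hstep hfeas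
end
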